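/- For all integers n ≥ 2, in the eternal vertex colouring game on the star K_{1,2n} played with 3 colours where Bob must always use the smallest legally available colour, Bob has a winning strategy; that is, χ_g^{∞2}(K_{1,2n}) ≥ 4. -/

import Mathlib

open Finset

section EternalGame

variable {V : Type*} [Fintype V] [DecidableEq V]

/-- The colour `c` is a legal (re)colouring of `v`: it differs from the current colour of
`v` (if any) and from the colours of all neighbours of `v`. -/
def LegalColour (G : SimpleGraph V) {k : ℕ} (col : V → Option (Fin k)) (v : V) (c : Fin k) :
    Prop :=
  col v ≠ some c ∧ ∀ w, G.Adj v w → col w ≠ some c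

/-- The colour `c` is the smallest legal colour for `v` (the greedy choice). -/
def GreedyColour (G : SimpleGraph V) {k : ℕ} (col : V → Option (Fin k)) (v : V) (c : Fin k) :
    Prop :=
  LegalColour G col v c ∧ ∀ c' : Fin k, c' < c → ¬ LegalColour G col v c'

/-- When all vertices have been coloured in the current round, a new round starts and all
vertices become available again. -/
def availReset (done : Finset V) : Finset V :=
  if done = (Finset.univ : Finset V) then ∅ else done

/-- `BobWins G k aliceGreedy col done turn` : from the position in the eternal vertex
colouring game on `G` with colours `Fin k` where the current (partial) colouring is `col`,
the vertices already (re)coloured in the current round are `done`, and it is Alice's turn iff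
`turn = true`, Bob can force a win.  Bob always plays greedily (the smallest legal colour),
and Alice is also required to play greedily iff `aliceGreedy = true`.  Bob wins by picking,
on his turn, a vertex with no legal colour; Alice loses if, whatever legal move she makes
(including when she has none, being then forced to pick an uncolourable vertex), Bob can
force a win afterwards. -/
inductive BobWins (G : SimpleGraph V) (k : ℕ) (aliceGreedy : Bool) :
    (V → Option (Fin k)) → Finset V → Bool → Prop where
  | bobStuck (col : V → Option (Fin k)) (done : Finset V)
      (h : ∃ v ∉ availReset done, ∀ c, ¬ LegalColour G col v c) :
      BobWins G k aliceGreedy col done false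
  | bobMove (col : V → Option (Fin k)) (done : Finset V) (v : V) (c : Fin k)
      (hv : v ∉ availReset done) (hc : GreedyColour G col v c)
      (h : BobWins G k aliceGreedy (Function.update col v (some c))
        (insert v (availReset done)) true) :
      BobWins G k aliceGreedy col done false
  | aliceMove (col : V → Option (Fin k)) (done : Finset V)
      (h : ∀ v ∉ availReset done, ∀ c : Fin k,
        (if aliceGreedy then GreedyColour G col v c else LegalColour G col v c) →
        BobWins G k aliceGreedy (Function.update col v (some c))
          (insert v (availReset done)) false) :
      BobWins G k aliceGreedy col done true

end EternalGame

/-- The star `K_{1,m}`: vertex `0` is the centre, adjacent to the `m` leaves. -/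
def starGraph (m : ℕ) : SimpleGraph (Fin (m + 1)) where
  Adj v w := v ≠ w ∧ (v = 0 ∨ w = 0)
  symm := by constructor; intro v w h; exact ⟨h.1.symm, h.2.symm⟩
  loopless := by constructor; intro v h; exact h.1 rfl

/-!
Whatever happens in the first round, once it is complete the vertices carry a proper colouring;
on `K_{1,2n}` this means the centre has some colour `a` and every leaf a colour other than `a`.
During that round Bob just colours any uncoloured vertex greedily (if it has no legal colour he
has already won). As the star has an odd number of vertices, Bob opens the second round. With at
most two colours every leaf is then stuck. With three colours, if the leaves use both colours
other than `a` the centre is stuck; otherwise they all have one colour `r`, Bob recolours a leaf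
with the third colour, and after any reply of Alice the centre still sees `a`, that third colour
and `r` on some untouched leaf (here `2n ≥ 3` is needed), so Bob picks the centre.
-/

open Function

section EternalGame

variable {V : Type*} {G : SimpleGraph V} {k : ℕ} {col : V → Option (Fin k)} {v : V} {c : Fin k}

theorem LegalColour.of_ite {ag : Bool}
    (h : if ag then GreedyColour G col v c else LegalColour G col v c) :
    LegalColour G col v c := by
  cases ag
  exacts [h, h.1]

theorem LegalColour.exists_greedyColour (h : LegalColour G col v c) :
    ∃ c', GreedyColour G col v c' := by
  obtain ⟨c', hc', hmin⟩ := wellFounded_lt.has_min {c | LegalColour G col v c} ⟨c, h⟩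
  exact ⟨c', hc', fun c'' hlt hc'' => hmin c'' hc'' hlt⟩

theorem exists_legalColour_of_card_lt [Fintype V] (hk : Fintype.card V < k) :
    ∃ c, LegalColour G col v c := by
  by_contra! h
  have hocc : ∀ c, ∃ w, col w = some c := fun c => by
    by_contra! hw
    exact h c ⟨hw v, fun w _ => hw w⟩
  choose f hf using hocc
  have hinj : Injective f := fun c c' he =>
    Option.some_injective _ ((hf c).symm.trans (he ▸ hf c'))
  exact hk.not_ge (by simpa using Fintype.card_le_of_injective f hinj)

def IsPartialColouring (G : SimpleGraph V) (col : V → Option (Fin k)) : Prop :=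
  ∀ ⦃u w⦄, G.Adj u w → ∀ c, col u = some c → col w ≠ some c

theorem IsPartialColouring.update [DecidableEq V] (hcol : IsPartialColouring G col)
    (hc : LegalColour G col v c) : IsPartialColouring G (update col v (some c)) := by
  intro u w huw d hu hw
  rcases eq_or_ne u v with rfl | huv
  · rw [update_self, Option.some_inj] at hu
    rw [update_of_ne huw.ne'] at hw
    exact hc.2 w huw (hu ▸ hw)
  · rw [update_of_ne huv] at hu
    rcases eq_or_ne w v with rfl | hwv
    · rw [update_self, Option.some_inj] at hw
      exact hc.2 u huw.symm (hw ▸ hu)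
    · exact hcol huw d hu (by rwa [update_of_ne hwv] at hw)

variable [Fintype V] [DecidableEq V]

theorem availReset_univ : availReset (univ : Finset V) = ∅ := if_pos rfl

theorem availReset_of_ne_univ {s : Finset V} (hs : s ≠ univ) : availReset s = s := if_neg hs

theorem availReset_of_notMem {s : Finset V} (hv : v ∉ s) : availReset s = s :=
  availReset_of_ne_univ fun h => hv (h ▸ mem_univ v)

theorem availReset_ne_univ [Nonempty V] (s : Finset V) : availReset s ≠ univ := by
  unfold availReset
  split_ifs with hs
  exacts [univ_nonempty.ne_empty.symm, hs]

theorem not_bobWins_of_card_lt [Nonempty V] (hk : Fintype.card V < k) {ag : Bool}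
    {s : Finset V} {turn : Bool} : ¬ BobWins G k ag col s turn := by
  intro h
  induction h with
  | bobStuck col s hstuck =>
    obtain ⟨v, -, hv⟩ := hstuck
    obtain ⟨c, hc⟩ := exists_legalColour_of_card_lt (G := G) (col := col) (v := v) hk
    exact hv c hc
  | bobMove _ _ _ _ _ _ _ ih => exact ih
  | aliceMove col s _ ih =>
    obtain ⟨v, hv⟩ := not_forall.mp fun h => availReset_ne_univ s (eq_univ_of_forall h)
    obtain ⟨c, hc⟩ := exists_legalColour_of_card_lt (G := G) (col := col) (v := v) hk
    cases ag
    · exact ih v hv c hc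
    · obtain ⟨c', hc'⟩ := hc.exists_greedyColour
      exact ih v hv c' hc'

/-- `turn = true ↔ Odd sᶜ.card` says that the first round ends with a move of Alice, so that Bob
opens the second one. -/
theorem bobWins_of_bobWins_round_two (ag : Bool)
    (hwin : ∀ col : V → Option (Fin k), (∀ v, col v ≠ none) → IsPartialColouring G col →
      BobWins G k ag col univ false)
    {s : Finset V} {turn : Bool} (hturn : turn = true ↔ Odd sᶜ.card)
    (hs : ∀ v ∈ s, col v ≠ none) (hcol : IsPartialColouring G col) :
    BobWins G k ag col s turn := by
  obtain ⟨r, hr⟩ : ∃ r, sᶜ.card = r := ⟨_, rfl⟩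
  induction r generalizing col s turn with
  | zero =>
    obtain rfl : s = univ := by simpa using hr
    obtain rfl : turn = false := by simpa [hr] using hturn
    exact hwin col (fun v => hs v (mem_univ v)) hcol
  | succ r ih =>
    have hne : s ≠ univ := by rintro rfl; simp at hr
    rw [hr, Nat.odd_add_one] at hturn
    have hmove : ∀ v ∉ s, ∀ c, LegalColour G col v c →
        ∀ turn', (turn' = true ↔ Odd r) →
        BobWins G k ag (update col v (some c)) (insert v (availReset s)) turn' := by
      intro v hv c hc turn' hturn'
      have hcard : (insert v s)ᶜ.card = r := by
        rw [compl_insert, card_erase_of_mem (mem_compl.mpr hv), hr, Nat.add_sub_cancel]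
      rw [availReset_of_ne_univ hne]
      refine ih (by rwa [hcard]) ?_ (hcol.update hc) hcard
      intro w hw
      rcases eq_or_ne w v with rfl | hwv
      · simp
      · rw [update_of_ne hwv]
        exact hs w ((mem_insert.mp hw).resolve_left hwv)
    cases turn with
    | false =>
      obtain ⟨v, hv⟩ := not_forall.mp fun h => hne (eq_univ_of_forall h)
      have hv' : v ∉ availReset s := by rwa [availReset_of_ne_univ hne]
      by_cases hleg : ∃ c, LegalColour G col v c
      · obtain ⟨c, hc⟩ := hleg.choose_spec.exists_greedyColour
        exact .bobMove _ _ v c hv' hc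
          (hmove v hv c hc.1 true (by simpa using hturn))
      · exact .bobStuck _ _ ⟨v, hv', not_exists.mp hleg⟩
    | true =>
      refine .aliceMove _ _ fun v hv c hc => hmove v ?_ c (LegalColour.of_ite hc) false ?_
      · rwa [availReset_of_ne_univ hne] at hv
      · simpa using hturn

end EternalGame

theorem Fin.eq_or_eq_of_ne_of_le_two {k : ℕ} (hk : k ≤ 2) {a b : Fin k} (hab : a ≠ b)
    (c : Fin k) : c = a ∨ c = b := by
  omega

theorem Fin.three_eq_or_eq_or_eq {a b c : Fin 3} (hab : a ≠ b) (hac : a ≠ c) (hbc : b ≠ c)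
    (d : Fin 3) : d = a ∨ d = b ∨ d = c := by
  omega

theorem Fin.three_exists_ne_ne (a b : Fin 3) : ∃ c, a ≠ c ∧ b ≠ c := by
  revert a b
  decide

section Star

variable {m k : ℕ} {col : Fin (m + 1) → Option (Fin k)}

theorem starGraph_adj_zero {v : Fin (m + 1)} (hv : v ≠ 0) : (starGraph m).Adj 0 v :=
  ⟨hv.symm, .inl rfl⟩

theorem legalColour_starGraph_leaf_iff {v : Fin (m + 1)} (hv : v ≠ 0) {c : Fin k} :
    LegalColour (starGraph m) col v c ↔ col v ≠ some c ∧ col 0 ≠ some c := by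
  refine ⟨fun h => ⟨h.1, h.2 0 (starGraph_adj_zero hv).symm⟩, fun h => ⟨h.1, ?_⟩⟩
  rintro w ⟨-, hv0 | rfl⟩
  exacts [absurd hv0 hv, h.2]

theorem not_legalColour_starGraph_zero {col : Fin (m + 1) → Option (Fin 3)} {v w : Fin (m + 1)}
    (hv : v ≠ 0) (hw : w ≠ 0) {a b c : Fin 3} (hab : a ≠ b) (hac : a ≠ c) (hbc : b ≠ c)
    (ha : col 0 = some a) (hb : col v = some b) (hc : col w = some c) (d : Fin 3) :
    ¬ LegalColour (starGraph m) col 0 d := by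
  rintro ⟨h0, hadj⟩
  rcases Fin.three_eq_or_eq_or_eq hab hac hbc d with rfl | rfl | rfl
  exacts [h0 ha, hadj v (starGraph_adj_zero hv) hb, hadj w (starGraph_adj_zero hw) hc]

theorem bobWins_starGraph_round_two_of_le_two (hk : k ≤ 2) (hm : 1 ≤ m) (ag : Bool)
    (hfull : ∀ v, col v ≠ none) (hcol : IsPartialColouring (starGraph m) col) :
    BobWins (starGraph m) k ag col univ false := by
  have h1 : (⟨1, by omega⟩ : Fin (m + 1)) ≠ 0 := Fin.ne_of_val_ne one_ne_zero
  obtain ⟨a, ha⟩ := Option.ne_none_iff_exists'.mp (hfull 0)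
  obtain ⟨b, hb⟩ := Option.ne_none_iff_exists'.mp (hfull ⟨1, by omega⟩)
  have hab : a ≠ b := by rintro rfl; exact hcol (starGraph_adj_zero h1) a ha hb
  refine .bobStuck _ _ ⟨⟨1, by omega⟩, by simp [availReset_univ], fun c hc => ?_⟩
  rw [legalColour_starGraph_leaf_iff h1] at hc
  rcases Fin.eq_or_eq_of_ne_of_le_two hk hab c with rfl | rfl
  exacts [hc.2 ha, hc.1 hb]

theorem bobWins_starGraph_three_of_leaves_eq (hm : 3 ≤ m) (ag : Bool)
    {col : Fin (m + 1) → Option (Fin 3)} {a r : Fin 3} (har : a ≠ r) (ha : col 0 = some a)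
    (hr : ∀ v ≠ 0, col v = some r) :
    BobWins (starGraph m) 3 ag col univ false := by
  set l₁ : Fin (m + 1) := ⟨1, by omega⟩
  set l₂ : Fin (m + 1) := ⟨2, by omega⟩
  set l₃ : Fin (m + 1) := ⟨3, by omega⟩
  have hl₁ : l₁ ≠ 0 := by simp [l₁, Fin.ext_iff]
  have hl₂ : l₂ ≠ 0 := by simp [l₂, Fin.ext_iff]
  have hl₃ : l₃ ≠ 0 := by simp [l₃, Fin.ext_iff]
  have hl₁₂ : l₁ ≠ l₂ := by simp [l₁, l₂, Fin.ext_iff]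
  have hl₁₃ : l₁ ≠ l₃ := by simp [l₁, l₃, Fin.ext_iff]
  have hl₂₃ : l₂ ≠ l₃ := by simp [l₂, l₃, Fin.ext_iff]
  obtain ⟨s, hrs, has⟩ := Fin.three_exists_ne_ne r a
  have hs : LegalColour (starGraph m) col l₁ s := by
    rw [legalColour_starGraph_leaf_iff hl₁, hr l₁ hl₁, ha]
    simp [hrs, has]
  obtain ⟨c, hc⟩ := hs.exists_greedyColour
  have hcl := hc.1
  rw [legalColour_starGraph_leaf_iff hl₁, hr l₁ hl₁, ha] at hcl
  have hac : a ≠ c := fun h => hcl.2 (by rw [h])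
  have hcr : c ≠ r := fun h => hcl.1 (by rw [h])
  have hblocked : ∀ col' : Fin (m + 1) → Option (Fin 3),
      col' 0 = some a → col' l₁ = some c →
      ∀ w ≠ 0, col' w = some r → ∀ d, ¬ LegalColour (starGraph m) col' 0 d :=
    fun col' ha' hc' w hw hr' => not_legalColour_starGraph_zero hl₁ hw hac har hcr ha' hc' hr'
  refine .bobMove _ _ l₁ c (by simp [availReset_univ]) hc (.aliceMove _ _ fun u hu c' hc' => ?_)
  rw [availReset_univ, availReset_of_notMem (v := 0) (by simp [hl₁.symm])] at hu ⊢
  have hul₁ : u ≠ l₁ := by simpa using hu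
  by_cases hu0 : u = 0
  · subst hu0
    refine absurd (LegalColour.of_ite hc') (hblocked _ ?_ (by simp) l₂ hl₂ ?_ c')
    · simp [update_of_ne hl₁.symm, ha]
    · simp [update_of_ne hl₁₂.symm, hr l₂ hl₂]
  obtain ⟨w, hw0, hwl₁, hwu⟩ : ∃ w, w ≠ 0 ∧ w ≠ l₁ ∧ w ≠ u := by
    by_cases hul₂ : u = l₂
    · exact ⟨l₃, hl₃, hl₁₃.symm, hul₂ ▸ hl₂₃.symm⟩
    · exact ⟨l₂, hl₂, hl₁₂.symm, Ne.symm hul₂⟩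
  refine .bobStuck _ _ ⟨0, ?_, hblocked _ ?_ ?_ w hw0 ?_⟩
  · rw [availReset_of_notMem (v := 0)] <;> simp [Ne.symm hu0, hl₁.symm]
  · simp [update_of_ne (Ne.symm hu0), update_of_ne hl₁.symm, ha]
  · simp [update_of_ne hul₁.symm]
  · simp [update_of_ne hwu, update_of_ne hwl₁, hr w hw0]

theorem bobWins_starGraph_three_round_two (hm : 3 ≤ m) (ag : Bool)
    {col : Fin (m + 1) → Option (Fin 3)} (hfull : ∀ v, col v ≠ none)
    (hcol : IsPartialColouring (starGraph m) col) :
    BobWins (starGraph m) 3 ag col univ false := by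
  have hl₁ : (⟨1, by omega⟩ : Fin (m + 1)) ≠ 0 := Fin.ne_of_val_ne one_ne_zero
  obtain ⟨a, ha⟩ := Option.ne_none_iff_exists'.mp (hfull 0)
  obtain ⟨r, hr⟩ := Option.ne_none_iff_exists'.mp (hfull ⟨1, by omega⟩)
  have hleaf : ∀ v ≠ 0, ∀ r, col v = some r → a ≠ r := by
    rintro v hv r hr rfl
    exact hcol (starGraph_adj_zero hv) a ha hr
  by_cases hmono : ∀ v ≠ 0, col v = some r
  · exact bobWins_starGraph_three_of_leaves_eq hm ag (hleaf _ hl₁ r hr) ha hmono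
  push Not at hmono
  obtain ⟨v, hv, hvr⟩ := hmono
  obtain ⟨r', hr'⟩ := Option.ne_none_iff_exists'.mp (hfull v)
  exact .bobStuck _ _ ⟨0, by simp [availReset_univ], not_legalColour_starGraph_zero hl₁ hv
    (hleaf _ hl₁ r hr) (hleaf v hv r' hr') (fun h => hvr (h ▸ hr')) ha hr hr'⟩

theorem bobWins_starGraph_of_le_three {n k : ℕ} (hn : 2 ≤ n) (hk : k ≤ 3) (ag : Bool) :
    BobWins (starGraph (2 * n)) k ag (fun _ => none) ∅ true := by
  refine bobWins_of_bobWins_round_two ag (fun col hfull hcol => ?_) (by simp) (by simp)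
    (fun _ _ _ _ => by simp)
  rcases hk.lt_or_eq with hk | rfl
  · exact bobWins_starGraph_round_two_of_le_two (by omega) (by omega) ag hfull hcol
  · exact bobWins_starGraph_three_round_two (by omega) ag hfull hcol

end Star

/-- In the eternal vertex colouring game on `K_{1,2n}` with `3` colours where Bob always
plays the smallest legal colour (Alice unconstrained), Bob wins: `χ_g^{∞2}(K_{1,2n}) ≥ 4`. -/
theorem stmt_15 (n : ℕ) (hn : 2 ≤ n) :
    BobWins (starGraph (2 * n)) 3 false (fun _ => none) ∅ true ∧
    4 ≤ sInf {k : ℕ | ¬ BobWins (starGraph (2 * n)) k false (fun _ => none) ∅ true} := by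
  refine ⟨bobWins_starGraph_of_le_three hn le_rfl false,
    le_csInf ⟨2 * n + 2, ?_⟩ fun k hk => ?_⟩
  · exact not_bobWins_of_card_lt (by simp)
  · by_contra! hk4
    exact hk (bobWins_starGraph_of_le_three hn (by omega) false)
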